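/- (Time reversal of perfect blocks) Let (z^1,…,z^n) be a word over 𝒞 ∪ 𝒮 that is a perfect block, i.e. its FCFS directed matching matches every customer entry to a server entry within the word. Let (z̃^1,…,z̃^n) be its exchange transformation: if z^k = c was matched to z^l = s (k < l) then z̃^k = s and z̃^l = c, and unmatched server entries are unchanged. Then the reversed word (z̃^n, z̃^{n−1},…,z̃^1) is also a perfect block, and its FCFS directed matching consists exactly of the original matched pairs with positions exchanged and order reversed: whenever z^k was matched to z^l (k < l) in the original word, the customer entry z̃^l is matched to the server entry z̃^k in the reversed word. -/

import Mathlib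

/-- FCFS directed matching of a finite word, scanning left to right.
`fcfsAux R rest n q` processes the remaining word `rest`, where `n` is the position of
the first entry of `rest` in the whole word, and `q` is the ordered queue of
still-unmatched customer entries (position, type) seen so far.  A server entry is matched
to the earliest unmatched compatible customer before it, if any; the output is the list
of matched pairs of positions `(customer position, server position)`. -/
def fcfsAux {C S : Type*} (R : C → S → Prop) [∀ c s, Decidable (R c s)] :
    List (C ⊕ S) → ℕ → List (ℕ × C) → List (ℕ × ℕ)
  | [], _, _ => []
  | Sum.inl c :: rest, n, q => fcfsAux R rest (n + 1) (q ++ [(n, c)])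
  | Sum.inr s :: rest, n, q =>
      match q.find? (fun p => decide (R p.2 s)) with
      | some p => (p.1, n) :: fcfsAux R rest (n + 1) (q.eraseP (fun p' => decide (R p'.2 s)))
      | none => fcfsAux R rest (n + 1) q

/-- The matched pairs of positions of the FCFS directed matching of the word `w`. -/
def fcfsMatching {C S : Type*} (R : C → S → Prop) [∀ c s, Decidable (R c s)]
    (w : List (C ⊕ S)) : List (ℕ × ℕ) := fcfsAux R w 0 []

/-- Number of customer entries of a word. -/
def numC {C S : Type*} (w : List (C ⊕ S)) : ℕ := w.countP (fun z => z.isLeft)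

/-- Number of server entries of a word. -/
def numS {C S : Type*} (w : List (C ⊕ S)) : ℕ := w.countP (fun z => z.isRight)

/-- Number of customer entries left unmatched by the FCFS directed matching. -/
def unmatchedC {C S : Type*} (R : C → S → Prop) [∀ c s, Decidable (R c s)]
    (w : List (C ⊕ S)) : ℕ := numC w - (fcfsMatching R w).length

/-- Number of server entries left unmatched by the FCFS directed matching. -/
def unmatchedS {C S : Type*} (R : C → S → Prop) [∀ c s, Decidable (R c s)]
    (w : List (C ⊕ S)) : ℕ := numS w - (fcfsMatching R w).length

/-- A word is a perfect block if its FCFS directed matching matches every customer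
entry. -/
def IsPerfect {C S : Type*} (R : C → S → Prop) [∀ c s, Decidable (R c s)]
    (w : List (C ⊕ S)) : Prop := (fcfsMatching R w).length = numC w

/-- The exchange transformation: the entries of each matched pair of the FCFS directed
matching are swapped, and unmatched entries are unchanged. -/
def exchange {C S : Type*} (R : C → S → Prop) [∀ c s, Decidable (R c s)] [Inhabited C]
    (w : List (C ⊕ S)) : List (C ⊕ S) :=
  (List.range w.length).map fun k =>
    match (fcfsMatching R w).find? (fun p => p.1 == k) with
    | some p => w.getD p.2 (Sum.inl default)
    | none =>
      match (fcfsMatching R w).find? (fun p => p.2 == k) with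
      | some p => w.getD p.1 (Sum.inl default)
      | none => w.getD k (Sum.inl default)

/-!
The FCFS matching of a word is the unique partial matching of compatible pairs (customer,
later server), injective on both sides, that is greedy: for every compatible customer `k` and
later server `l`, either `k` is matched to `l`, or `k` is matched to a server before `l`, or
`l` is matched to a customer before `k` (uniqueness by strong induction on the server
position). In a perfect block every customer is matched, so after exchanging and reversing
time the customers are exactly the former servers of matched pairs, and the servers are the
former customers of matched pairs or the unmatched servers. The greedy condition of the
original word then shows that the reflected matching is greedy for the reversed word; by
uniqueness it is its FCFS matching, and it matches every customer.
-/

namespace List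

variable {α : Type*} {p : α → Bool} {l : List α} {a b : α}

theorem exists_append_of_find?_eq_some (h : l.find? p = some a) :
    ∃ l₁ l₂, l = l₁ ++ a :: l₂ ∧ l.eraseP p = l₁ ++ l₂ ∧ ∀ b ∈ l₁, ¬p b := by
  obtain ⟨hpa, l₁, l₂, rfl, hl₁⟩ := find?_eq_some_iff_append.1 h
  have hl₁' : ∀ b ∈ l₁, ¬p b := fun b hb => by simpa using hl₁ b hb
  exact ⟨l₁, l₂, rfl, by rw [eraseP_append_right _ hl₁', eraseP_cons_of_pos hpa], hl₁'⟩

theorem mem_iff_eq_or_mem_eraseP_of_find?_eq_some (h : l.find? p = some a) :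
    b ∈ l ↔ b = a ∨ b ∈ l.eraseP p := by
  obtain ⟨l₁, l₂, rfl, he, -⟩ := exists_append_of_find?_eq_some h
  rw [he]
  simp only [mem_append, mem_cons]
  tauto

theorem Pairwise.eq_or_rel_of_find?_eq_some {r : α → α → Prop} (hl : l.Pairwise r)
    (h : l.find? p = some a) (hb : b ∈ l) (hpb : p b) : b = a ∨ r a b := by
  obtain ⟨l₁, l₂, rfl, -, hl₁⟩ := exists_append_of_find?_eq_some h
  rw [pairwise_append, pairwise_cons] at hl
  rcases mem_append.1 hb with hb | hb
  · exact absurd hpb (hl₁ b hb)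
  · rcases mem_cons.1 hb with rfl | hb
    · exact Or.inl rfl
    · exact Or.inr (hl.2.1.1 b hb)

theorem Pairwise.rel_of_mem_eraseP {r : α → α → Prop} (hl : l.Pairwise r)
    (h : l.find? p = some a) (hb : b ∈ l.eraseP p) : r b a ∨ r a b := by
  obtain ⟨l₁, l₂, rfl, he, -⟩ := exists_append_of_find?_eq_some h
  rw [pairwise_append, pairwise_cons] at hl
  rcases mem_append.1 (he ▸ hb) with hb | hb
  · exact Or.inl (hl.2.2 b hb a mem_cons_self)
  · exact Or.inr (hl.2.1.1 b hb)

theorem find?_eq_some_of_unique (ha : a ∈ l) (hpa : p a) (hu : ∀ b ∈ l, p b → b = a) :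
    l.find? p = some a := by
  cases h : l.find? p with
  | none => exact absurd hpa (find?_eq_none.1 h a ha)
  | some b => rw [hu b (mem_of_find?_eq_some h) (find?_some h)]

theorem getElem?_cons_sub {x : α} {n i : ℕ} (h : n < i) :
    (x :: l)[i - n]? = l[i - (n + 1)]? := by
  rw [show i - n = i - (n + 1) + 1 by omega, getElem?_cons_succ]

theorem getElem?_reverse_sub {i : ℕ} (hi : i < l.length) :
    l.reverse[l.length - 1 - i]? = l[i]? :=
  getElem?_reverse' (by omega)

end List

section

variable {C S : Type*}

theorem numC_cons_inl (c : C) (w : List (C ⊕ S)) :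
    numC (.inl c :: w) = numC w + 1 := by
  simp [numC, List.countP_cons]

theorem numC_cons_inr (s : S) (w : List (C ⊕ S)) :
    numC (.inr s :: w) = numC w := by
  simp [numC]

structure IsQueue (n : ℕ) (q : List (ℕ × C)) : Prop where
  sorted : q.Pairwise (fun a b => a.1 < b.1)
  lt : ∀ p ∈ q, p.1 < n

namespace IsQueue

variable {n : ℕ} {q : List (ℕ × C)}

theorem nil : IsQueue n ([] : List (ℕ × C)) := ⟨List.Pairwise.nil, by simp⟩

theorem succ (hq : IsQueue n q) : IsQueue (n + 1) q :=
  ⟨hq.sorted, fun p hp => (hq.lt p hp).trans n.lt_succ_self⟩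

theorem append_singleton (hq : IsQueue n q) (c : C) : IsQueue (n + 1) (q ++ [(n, c)]) := by
  refine ⟨List.pairwise_append.2 ⟨hq.sorted, List.pairwise_singleton _ _, ?_⟩, ?_⟩
  · simpa using fun p hp => hq.lt p hp
  · simpa [or_imp, forall_and] using fun p hp => (hq.lt p hp).trans n.lt_succ_self

theorem eraseP (hq : IsQueue n q) (f : ℕ × C → Bool) : IsQueue (n + 1) (q.eraseP f) :=
  ⟨hq.sorted.sublist List.eraseP_sublist,
    fun p hp => hq.succ.lt p (List.eraseP_sublist.subset hp)⟩

end IsQueue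

/-- While `fcfsAux` scans `rest`, which starts at position `n` of the word, the customer of
type `c` at position `k` is still unmatched: it waits in the queue `q` or has yet to come. -/
def Pending (rest : List (C ⊕ S)) (n : ℕ) (q : List (ℕ × C)) (k : ℕ) (c : C) : Prop :=
  (k, c) ∈ q ∨ n ≤ k ∧ rest[k - n]? = some (.inl c)

section Pending

variable {rest : List (C ⊕ S)} {n k : ℕ} {q : List (ℕ × C)} {c : C}

theorem pending_cons_inl {c₀ : C} :
    Pending (.inl c₀ :: rest) n q k c ↔ Pending rest (n + 1) (q ++ [(n, c₀)]) k c := by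
  unfold Pending
  rcases lt_trichotomy k n with h | rfl | h
  · simp [h.not_ge, (h.trans n.lt_succ_self).not_ge, h.ne]
  · simp [eq_comm]
  · simp [h.le, h, List.getElem?_cons_sub h, h.ne']

theorem pending_cons_inr {s : S} :
    Pending (.inr s :: rest) n q k c ↔ Pending rest (n + 1) q k c := by
  unfold Pending
  rcases lt_trichotomy k n with h | rfl | h
  · simp [h.not_ge, (h.trans n.lt_succ_self).not_ge]
  · simp
  · simp [h.le, h, List.getElem?_cons_sub h]

theorem pending_zero_nil : Pending rest 0 [] k c ↔ rest[k]? = some (.inl c) := by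
  simp [Pending]

theorem pending_iff_of_find?_eq_some {f : ℕ × C → Bool} {p₀ : ℕ × C}
    (h : q.find? f = some p₀) :
    Pending rest n q k c ↔ (k, c) = p₀ ∨ Pending rest n (q.eraseP f) k c := by
  unfold Pending
  rw [List.mem_iff_eq_or_mem_eraseP_of_find?_eq_some h]
  tauto

theorem IsQueue.fst_ne_of_pending_eraseP (hq : IsQueue n q) {f : ℕ × C → Bool}
    {p₀ : ℕ × C} (h : q.find? f = some p₀) (hk : Pending rest (n + 1) (q.eraseP f) k c) :
    k ≠ p₀.1 := by
  have := hq.lt p₀ (List.mem_of_find?_eq_some h)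
  rcases hk with hk | ⟨hk, -⟩
  · rcases hq.sorted.rel_of_mem_eraseP h hk with h | h <;> omega
  · omega

end Pending

section fcfsAux

variable (R : C → S → Prop) [∀ c s, Decidable (R c s)]

theorem le_snd_of_mem_fcfsAux {rest : List (C ⊕ S)} {n : ℕ} {q : List (ℕ × C)} :
    ∀ p ∈ fcfsAux R rest n q, n ≤ p.2 := by
  fun_induction fcfsAux R rest n q with
  | case1 => simp
  | case2 _ _ n _ ih | case4 _ _ n _ _ ih => exact fun p hp => (ih p hp).trans' n.le_succ
  | case3 _ _ n _ _ _ ih =>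
    simp only [List.mem_cons, forall_eq_or_imp, le_refl, true_and]
    exact fun p hp => (ih p hp).trans' n.le_succ

theorem pairwise_snd_fcfsAux (rest : List (C ⊕ S)) (n : ℕ) (q : List (ℕ × C)) :
    (fcfsAux R rest n q).Pairwise (fun a b => a.2 < b.2) := by
  fun_induction fcfsAux R rest n q with
  | case1 => exact List.Pairwise.nil
  | case2 _ _ _ _ ih | case4 _ _ _ _ _ ih => exact ih
  | case3 _ _ _ _ _ _ ih =>
    exact List.pairwise_cons.2 ⟨fun p hp => le_snd_of_mem_fcfsAux R p hp, ih⟩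

theorem fcfsAux_valid {rest : List (C ⊕ S)} {n : ℕ} {q : List (ℕ × C)} (hq : IsQueue n q) :
    ∀ k l, (k, l) ∈ fcfsAux R rest n q → k < l ∧ n ≤ l ∧
      ∃ c s, Pending rest n q k c ∧ rest[l - n]? = some (.inr s) ∧ R c s := by
  fun_induction fcfsAux R rest n q with
  | case1 => simp
  | case2 c₀ rest n q ih =>
    intro k l hkl
    obtain ⟨hkl, hnl, c, s, hk, hl, hR⟩ := ih (hq.append_singleton c₀) k l hkl
    exact ⟨hkl, by omega, c, s, pending_cons_inl.2 hk, by rwa [List.getElem?_cons_sub hnl], hR⟩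
  | case3 s₀ rest n q p₀ hfind ih =>
    rintro k l (⟨⟩ | ⟨_, hkl⟩)
    · have hp₀ := List.mem_of_find?_eq_some hfind
      exact ⟨hq.lt p₀ hp₀, le_rfl, p₀.2, s₀, Or.inl hp₀, by simp,
        by simpa using List.find?_some hfind⟩
    · obtain ⟨hkl, hnl, c, s, hk, hl, hR⟩ := ih (hq.eraseP _) k l hkl
      refine ⟨hkl, by omega, c, s, ?_, by rwa [List.getElem?_cons_sub hnl], hR⟩
      exact pending_cons_inr.2 ((pending_iff_of_find?_eq_some hfind).2 (Or.inr hk))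
  | case4 s₀ rest n q _ ih =>
    intro k l hkl
    obtain ⟨hkl, hnl, c, s, hk, hl, hR⟩ := ih hq.succ k l hkl
    exact ⟨hkl, by omega, c, s, pending_cons_inr.2 hk, by rwa [List.getElem?_cons_sub hnl], hR⟩

theorem pairwise_fst_fcfsAux {rest : List (C ⊕ S)} {n : ℕ} {q : List (ℕ × C)}
    (hq : IsQueue n q) : (fcfsAux R rest n q).Pairwise (fun a b => a.1 ≠ b.1) := by
  fun_induction fcfsAux R rest n q with
  | case1 => exact List.Pairwise.nil
  | case2 c₀ _ _ _ ih => exact ih (hq.append_singleton c₀)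
  | case3 _ _ _ _ _ hfind ih =>
    refine List.pairwise_cons.2 ⟨fun p hp => ?_, ih (hq.eraseP _)⟩
    obtain ⟨-, -, c, -, hk, -⟩ := fcfsAux_valid R (hq.eraseP _) p.1 p.2 hp
    exact (hq.fst_ne_of_pending_eraseP hfind hk).symm
  | case4 _ _ _ _ _ ih => exact ih hq.succ

theorem fcfsAux_greedy {rest : List (C ⊕ S)} {n : ℕ} {q : List (ℕ × C)} (hq : IsQueue n q)
    {k l : ℕ} {c : C} {s : S} (hkl : k < l) (hnl : n ≤ l) (hk : Pending rest n q k c)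
    (hl : rest[l - n]? = some (.inr s)) (hR : R c s) :
    (k, l) ∈ fcfsAux R rest n q ∨ (∃ l' < l, (k, l') ∈ fcfsAux R rest n q) ∨
      ∃ k' < k, (k', l) ∈ fcfsAux R rest n q := by
  fun_induction fcfsAux R rest n q with
  | case1 => simp at hl
  | case2 c₀ rest n q ih =>
    have hnl' : n < l := hnl.lt_of_ne (by rintro rfl; simp at hl)
    rw [List.getElem?_cons_sub hnl'] at hl
    exact ih (hq.append_singleton c₀) hnl' (pending_cons_inl.1 hk) hl
  | case3 s₀ rest n q p₀ hfind ih =>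
    rw [pending_cons_inr, pending_iff_of_find?_eq_some hfind] at hk
    rcases hnl.eq_or_lt with rfl | hnl'
    · obtain rfl : s = s₀ := by simpa using hl.symm
      rcases hk with rfl | hk
      · exact Or.inl List.mem_cons_self
      have hne := hq.fst_ne_of_pending_eraseP hfind hk
      rcases hk with hk | ⟨hk, -⟩
      · have hkq : (k, c) ∈ q := List.eraseP_sublist.subset hk
        rcases hq.sorted.eq_or_rel_of_find?_eq_some hfind hkq (by simpa using hR) with h | h
        · exact absurd (congrArg Prod.fst h) hne
        · exact Or.inr (Or.inr ⟨p₀.1, h, List.mem_cons_self⟩)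
      · omega
    · rcases hk with rfl | hk
      · exact Or.inr (Or.inl ⟨n, hnl', List.mem_cons_self⟩)
      rw [List.getElem?_cons_sub hnl'] at hl
      rcases ih (hq.eraseP _) hnl' hk hl with h | ⟨l', hl', h⟩ | ⟨k', hk', h⟩
      · exact Or.inl (List.mem_cons_of_mem _ h)
      · exact Or.inr (Or.inl ⟨l', hl', List.mem_cons_of_mem _ h⟩)
      · exact Or.inr (Or.inr ⟨k', hk', List.mem_cons_of_mem _ h⟩)
  | case4 s₀ rest n q hfind ih =>
    rw [pending_cons_inr] at hk
    rcases hnl.eq_or_lt with rfl | hnl'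
    · obtain rfl : s = s₀ := by simpa using hl.symm
      rcases hk with hk | ⟨hk, -⟩
      · exact absurd (by simpa using hR) (List.find?_eq_none.1 hfind _ hk)
      · omega
    · rw [List.getElem?_cons_sub hnl'] at hl
      exact ih hq.succ hnl' hk hl

theorem length_fcfsAux_eq_iff {rest : List (C ⊕ S)} {n : ℕ} {q : List (ℕ × C)}
    (hq : IsQueue n q) :
    (fcfsAux R rest n q).length = q.length + numC rest ↔
      ∀ k c, Pending rest n q k c → ∃ l, (k, l) ∈ fcfsAux R rest n q := by
  fun_induction fcfsAux R rest n q with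
  | case1 n q =>
    simp [numC, Pending, eq_comm (a := 0), List.eq_nil_iff_forall_not_mem]
  | case2 c₀ rest n q ih =>
    simp only [pending_cons_inl, ← ih (hq.append_singleton c₀), numC_cons_inl,
      List.length_append, List.length_singleton]
    omega
  | case3 s₀ rest n q p₀ hfind ih =>
    have hp₀ := List.mem_of_find?_eq_some hfind
    have hlen : q.length = (q.eraseP fun p => decide (R p.2 s₀)).length + 1 := by
      rw [List.length_eraseP_of_mem hp₀ (List.find?_some hfind)]
      have := List.length_pos_of_mem hp₀
      omega
    rw [List.length_cons, hlen, numC_cons_inr, add_right_comm, Nat.add_right_cancel_iff,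
      ih (hq.eraseP _)]
    simp only [pending_cons_inr, pending_iff_of_find?_eq_some hfind, List.mem_cons]
    constructor
    · rintro h k c (rfl | hk)
      · exact ⟨n, Or.inl rfl⟩
      · obtain ⟨l, hl⟩ := h k c hk
        exact ⟨l, Or.inr hl⟩
    · intro h k c hk
      obtain ⟨l, hl | hl⟩ := h k c (Or.inr hk)
      · exact absurd (congrArg Prod.fst hl) (hq.fst_ne_of_pending_eraseP hfind hk)
      · exact ⟨l, hl⟩
  | case4 s₀ rest n q _ ih =>
    rw [numC_cons_inr, ih hq.succ]
    simp only [pending_cons_inr]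

theorem isPerfect_iff (w : List (C ⊕ S)) :
    IsPerfect R w ↔ ∀ k c, w[k]? = some (.inl c) → ∃ l, (k, l) ∈ fcfsMatching R w := by
  simpa [IsPerfect, fcfsMatching, pending_zero_nil] using
    length_fcfsAux_eq_iff R (rest := w) (IsQueue.nil (n := 0))

end fcfsAux

structure IsFCFSMatching (R : C → S → Prop) (w : List (C ⊕ S)) (M : ℕ → ℕ → Prop) :
    Prop where
  valid : ∀ {k l}, M k l → k < l ∧
    ∃ c s, w[k]? = some (.inl c) ∧ w[l]? = some (.inr s) ∧ R c s
  leftUnique : Relator.LeftUnique M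
  rightUnique : Relator.RightUnique M
  greedy : ∀ {k l c s}, k < l → w[k]? = some (.inl c) → w[l]? = some (.inr s) → R c s →
    M k l ∨ (∃ l' < l, M k l') ∨ ∃ k' < k, M k' l

theorem isFCFSMatching_fcfsMatching (R : C → S → Prop) [∀ c s, Decidable (R c s)]
    (w : List (C ⊕ S)) : IsFCFSMatching R w (fun k l => (k, l) ∈ fcfsMatching R w) where
  valid {k l} h := by
    simpa [pending_zero_nil] using fcfsAux_valid R IsQueue.nil k l h
  leftUnique k k' l h h' := by
    have hnodup : ((fcfsMatching R w).map Prod.snd).Nodup :=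
      List.pairwise_map.2 ((pairwise_snd_fcfsAux R w 0 []).imp Nat.ne_of_lt)
    simpa using List.inj_on_of_nodup_map hnodup h h' rfl
  rightUnique k l l' h h' := by
    have hnodup : ((fcfsMatching R w).map Prod.fst).Nodup :=
      List.pairwise_map.2 (pairwise_fst_fcfsAux R IsQueue.nil)
    simpa using List.inj_on_of_nodup_map hnodup h h' rfl
  greedy hkl hk hl hR :=
    fcfsAux_greedy R IsQueue.nil hkl (Nat.zero_le _) (pending_zero_nil.2 hk) hl hR

def reflectMatching (n : ℕ) (M : ℕ → ℕ → Prop) (a b : ℕ) : Prop :=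
  ∃ k l, M k l ∧ a = n - 1 - l ∧ b = n - 1 - k

structure IsReversedExchange (M : ℕ → ℕ → Prop) (w u : List (C ⊕ S)) : Prop where
  length_eq : u.length = w.length
  getElem?_fst : ∀ {k l}, M k l → u[w.length - 1 - k]? = w[l]?
  getElem?_snd : ∀ {k l}, M k l → u[w.length - 1 - l]? = w[k]?
  getElem?_unmatched : ∀ {j}, j < w.length → (∀ l, ¬M j l) → (∀ k, ¬M k j) →
    u[w.length - 1 - j]? = w[j]?

variable {R : C → S → Prop} {w u : List (C ⊕ S)} {M : ℕ → ℕ → Prop}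

namespace IsFCFSMatching

variable {M₁ M₂ : ℕ → ℕ → Prop}

theorem snd_lt_length (hM : IsFCFSMatching R w M) {k l : ℕ} (h : M k l) : l < w.length := by
  obtain ⟨-, _, _, -, hs, -⟩ := hM.valid h
  exact (List.getElem?_eq_some_iff.1 hs).1

theorem of_agree_below (h₁ : IsFCFSMatching R w M₁) (h₂ : IsFCFSMatching R w M₂) {k l : ℕ}
    (hagree : ∀ l' < l, ∀ k', M₁ k' l' ↔ M₂ k' l') (hkl : M₁ k l) : M₂ k l := by
  obtain ⟨hlt, c, s, hc, hs, hR⟩ := h₁.valid hkl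
  rcases h₂.greedy hlt hc hs hR with h | ⟨l', hl', h⟩ | ⟨k', hk', h⟩
  · exact h
  · exact absurd (h₁.rightUnique hkl ((hagree l' hl' k).2 h)) hl'.ne'
  · obtain ⟨hk'l, c', s', hc', hs', hR'⟩ := h₂.valid h
    obtain rfl : s' = s := by simpa [hs] using hs'.symm
    rcases h₁.greedy hk'l hc' hs hR' with h' | ⟨l'', hl'', h'⟩ | ⟨k'', hk'', h'⟩
    · exact absurd (h₁.leftUnique h' hkl) hk'.ne
    · exact absurd (h₂.rightUnique h ((hagree l'' hl'' k').1 h')) hl''.ne'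
    · exact absurd (h₁.leftUnique h' hkl) (hk''.trans hk').ne

theorem unique (h₁ : IsFCFSMatching R w M₁) (h₂ : IsFCFSMatching R w M₂) : M₁ = M₂ := by
  suffices h : ∀ l k, M₁ k l ↔ M₂ k l from funext₂ fun k l => propext (h l k)
  intro l
  induction l using Nat.strong_induction_on with
  | _ l ih =>
    exact fun k => ⟨h₁.of_agree_below h₂ ih,
      h₂.of_agree_below h₁ fun l' hl' k' => (ih l' hl' k').symm⟩

end IsFCFSMatching

namespace IsReversedExchange

theorem exists_eq_length_sub_one_sub (hu : IsReversedExchange M w u) {a : ℕ} {x : C ⊕ S}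
    (ha : u[a]? = some x) : ∃ j < w.length, a = w.length - 1 - j := by
  have := hu.length_eq ▸ (List.getElem?_eq_some_iff.1 ha).1
  exact ⟨w.length - 1 - a, by omega, by omega⟩

theorem customer (hu : IsReversedExchange M w u) (hM : IsFCFSMatching R w M)
    (hperf : ∀ k c, w[k]? = some (.inl c) → ∃ l, M k l) {a : ℕ} {c : C}
    (ha : u[a]? = some (.inl c)) :
    ∃ k l, M k l ∧ a = w.length - 1 - l ∧ w[k]? = some (.inl c) := by
  obtain ⟨j, hj, rfl⟩ := hu.exists_eq_length_sub_one_sub ha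
  by_cases hfst : ∃ l, M j l
  · obtain ⟨l, hjl⟩ := hfst
    obtain ⟨-, -, s, -, hs, -⟩ := hM.valid hjl
    rw [hu.getElem?_fst hjl, hs] at ha
    cases ha
  by_cases hsnd : ∃ k, M k j
  · obtain ⟨k, hkj⟩ := hsnd
    exact ⟨k, j, hkj, rfl, by rw [← hu.getElem?_snd hkj, ha]⟩
  push Not at hfst hsnd
  rw [hu.getElem?_unmatched hj hfst hsnd] at ha
  obtain ⟨l, hjl⟩ := hperf j c ha
  exact absurd hjl (hfst l)

theorem server (hu : IsReversedExchange M w u) (hM : IsFCFSMatching R w M) {b : ℕ} {s : S}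
    (hb : u[b]? = some (.inr s)) :
    (∃ k l, M k l ∧ b = w.length - 1 - k ∧ w[l]? = some (.inr s)) ∨
      ∃ j, b = w.length - 1 - j ∧ (∀ k, ¬M k j) ∧ w[j]? = some (.inr s) := by
  obtain ⟨j, hj, rfl⟩ := hu.exists_eq_length_sub_one_sub hb
  by_cases hfst : ∃ l, M j l
  · obtain ⟨l, hjl⟩ := hfst
    exact Or.inl ⟨j, l, hjl, rfl, by rw [← hu.getElem?_fst hjl, hb]⟩
  by_cases hsnd : ∃ k, M k j
  · obtain ⟨k, hkj⟩ := hsnd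
    obtain ⟨-, c, -, hc, -⟩ := hM.valid hkj
    rw [hu.getElem?_snd hkj, hc] at hb
    cases hb
  push Not at hfst hsnd
  exact Or.inr ⟨j, rfl, hsnd, by rw [← hu.getElem?_unmatched hj hfst hsnd, hb]⟩

theorem exists_reflectMatching (hu : IsReversedExchange M w u) (hM : IsFCFSMatching R w M)
    (hperf : ∀ k c, w[k]? = some (.inl c) → ∃ l, M k l) {a : ℕ} {c : C}
    (ha : u[a]? = some (.inl c)) : ∃ b, reflectMatching w.length M a b :=
  let ⟨k, l, hkl, hal, _⟩ := hu.customer hM hperf ha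
  ⟨_, k, l, hkl, hal, rfl⟩

end IsReversedExchange

namespace IsFCFSMatching

theorem greedy_reflect (hM : IsFCFSMatching R w M)
    (hperf : ∀ k c, w[k]? = some (.inl c) → ∃ l, M k l) (hu : IsReversedExchange M w u)
    {a b : ℕ} {c : C} {s : S} (hab : a < b) (ha : u[a]? = some (.inl c))
    (hb : u[b]? = some (.inr s)) (hR : R c s) :
    reflectMatching w.length M a b ∨ (∃ b' < b, reflectMatching w.length M a b') ∨
      ∃ a' < a, reflectMatching w.length M a' b := by
  obtain ⟨k, l, hkl, rfl, hk⟩ := hu.customer hM hperf ha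
  have hkl' := (hM.valid hkl).1
  have hln := hM.snd_lt_length hkl
  rcases hu.server hM hb with ⟨k', l', hkl'', rfl, hl'⟩ | ⟨j, rfl, hjun, hj⟩
  · have hk'l' := (hM.valid hkl'').1
    have hl'n := hM.snd_lt_length hkl''
    rcases lt_trichotomy k k' with hkk' | rfl | hkk'
    · rcases hM.greedy (hkk'.trans hk'l') hk hl' hR with h | ⟨l'', hl'', h⟩ | ⟨k'', hk'', h⟩
      · exact absurd (hM.leftUnique h hkl'') hkk'.ne
      · obtain rfl := hM.rightUnique hkl h
        exact Or.inr (Or.inr ⟨_, by omega, k', l', hkl'', rfl, rfl⟩)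
      · exact absurd (hM.leftUnique h hkl'') (hk''.trans hkk').ne
    · obtain rfl := hM.rightUnique hkl hkl''
      exact Or.inl ⟨k, l, hkl, rfl, rfl⟩
    · exact Or.inr (Or.inl ⟨_, by omega, k, l, hkl, rfl, rfl⟩)
  · have hjk : j < k := by
      by_contra! hkj
      have hkj' : k < j := hkj.lt_of_ne (by rintro rfl; rw [hk] at hj; cases hj)
      rcases hM.greedy hkj' hk hj hR with h | ⟨l'', hl'', h⟩ | ⟨k'', -, h⟩
      · exact hjun k h
      · obtain rfl := hM.rightUnique hkl h
        omega
      · exact hjun k'' h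
    exact Or.inr (Or.inl ⟨_, by omega, k, l, hkl, rfl, rfl⟩)

theorem reflect (hM : IsFCFSMatching R w M)
    (hperf : ∀ k c, w[k]? = some (.inl c) → ∃ l, M k l) (hu : IsReversedExchange M w u) :
    IsFCFSMatching R u (reflectMatching w.length M) where
  valid := by
    rintro - - ⟨k, l, hkl, rfl, rfl⟩
    obtain ⟨hlt, c, s, hc, hs, hR⟩ := hM.valid hkl
    have := hM.snd_lt_length hkl
    exact ⟨by omega, c, s, by rw [hu.getElem?_snd hkl, hc], by rw [hu.getElem?_fst hkl, hs], hR⟩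
  leftUnique := by
    rintro - - - ⟨k, l, hkl, rfl, rfl⟩ ⟨k', l', hkl', rfl, hkk'⟩
    have := hM.snd_lt_length hkl
    have := hM.snd_lt_length hkl'
    have := (hM.valid hkl).1
    have := (hM.valid hkl').1
    obtain rfl : k = k' := by omega
    rw [hM.rightUnique hkl hkl']
  rightUnique := by
    rintro - - - ⟨k, l, hkl, rfl, rfl⟩ ⟨k', l', hkl', hll', rfl⟩
    have := hM.snd_lt_length hkl
    have := hM.snd_lt_length hkl'
    obtain rfl : l = l' := by omega
    rw [hM.leftUnique hkl hkl']
  greedy := hM.greedy_reflect hperf hu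

end IsFCFSMatching

section exchange

variable [∀ c s, Decidable (R c s)] [Inhabited C]

theorem length_exchange : (exchange R w).length = w.length := by
  simp [exchange]

theorem getElem?_exchange_of_fst {k l : ℕ} (h : (k, l) ∈ fcfsMatching R w) :
    (exchange R w)[k]? = w[l]? := by
  have hM := isFCFSMatching_fcfsMatching R w
  have hl := hM.snd_lt_length h
  have hfind : (fcfsMatching R w).find? (fun p => p.1 == k) = some (k, l) :=
    List.find?_eq_some_of_unique h (by simp) fun ⟨k', l'⟩ hp hpk => by
      obtain rfl : k' = k := by simpa using hpk
      rw [hM.rightUnique hp h]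
  have hk : k < w.length := (hM.valid h).1.trans hl
  simp [exchange, List.getElem?_range hk, hfind, List.getElem?_eq_getElem hl]

theorem getElem?_exchange_of_snd {k l : ℕ} (h : (k, l) ∈ fcfsMatching R w) :
    (exchange R w)[l]? = w[k]? := by
  have hM := isFCFSMatching_fcfsMatching R w
  have hl := hM.snd_lt_length h
  have hfind₁ : (fcfsMatching R w).find? (fun p => p.1 == l) = none := by
    refine List.find?_eq_none.2 fun ⟨l', l''⟩ hp hpl => ?_
    obtain rfl : l' = l := by simpa using hpl
    obtain ⟨-, -, s, -, hs, -⟩ := hM.valid h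
    obtain ⟨-, c, -, hc, -⟩ := hM.valid hp
    simp [hs] at hc
  have hfind₂ : (fcfsMatching R w).find? (fun p => p.2 == l) = some (k, l) :=
    List.find?_eq_some_of_unique h (by simp) fun ⟨k', l'⟩ hp hpl => by
      obtain rfl : l' = l := by simpa using hpl
      rw [hM.leftUnique hp h]
  have hk : k < w.length := (hM.valid h).1.trans hl
  simp [exchange, List.getElem?_range hl, hfind₁, hfind₂, List.getElem?_eq_getElem hk]

theorem getElem?_exchange_of_unmatched {j : ℕ} (hj : j < w.length)
    (h₁ : ∀ l, (j, l) ∉ fcfsMatching R w) (h₂ : ∀ k, (k, j) ∉ fcfsMatching R w) :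
    (exchange R w)[j]? = w[j]? := by
  have hfind₁ : (fcfsMatching R w).find? (fun p => p.1 == j) = none :=
    List.find?_eq_none.2 fun ⟨k, l⟩ hp hpj => h₁ l (by rwa [← (by simpa using hpj : k = j)])
  have hfind₂ : (fcfsMatching R w).find? (fun p => p.2 == j) = none :=
    List.find?_eq_none.2 fun ⟨k, l⟩ hp hpj => h₂ k (by rwa [← (by simpa using hpj : l = j)])
  simp [exchange, List.getElem?_range hj, hfind₁, hfind₂, List.getElem?_eq_getElem hj]

theorem isReversedExchange_exchange :
    IsReversedExchange (fun k l => (k, l) ∈ fcfsMatching R w) w (exchange R w).reverse := by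
  have hM := isFCFSMatching_fcfsMatching R w
  have hlen : (exchange R w).length = w.length := length_exchange
  refine ⟨by rw [List.length_reverse, hlen], fun h => ?_, fun h => ?_, fun hj h₁ h₂ => ?_⟩
  · rw [← hlen, List.getElem?_reverse_sub (hlen ▸ (hM.valid h).1.trans (hM.snd_lt_length h)),
      getElem?_exchange_of_fst h]
  · rw [← hlen, List.getElem?_reverse_sub (hlen ▸ hM.snd_lt_length h), getElem?_exchange_of_snd h]
  · rw [← hlen, List.getElem?_reverse_sub (hlen ▸ hj), getElem?_exchange_of_unmatched hj h₁ h₂]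

end exchange

end

theorem stmt11_general {C S : Type*}
    [Inhabited C]
    (R : C → S → Prop) [∀ c s, Decidable (R c s)]
    (w : List (C ⊕ S)) (hw : IsPerfect R w) :
    IsPerfect R (exchange R w).reverse ∧
    ∀ a b : ℕ, ((a, b) ∈ fcfsMatching R (exchange R w).reverse ↔
      ∃ p ∈ fcfsMatching R w,
        a = w.length - 1 - p.2 ∧ b = w.length - 1 - p.1) := by
  have hM := isFCFSMatching_fcfsMatching R w
  have hperf := (isPerfect_iff R w).1 hw
  have hu : IsReversedExchange _ w (exchange R w).reverse := isReversedExchange_exchange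
  have hmatch : ∀ a b, (a, b) ∈ fcfsMatching R (exchange R w).reverse ↔
      reflectMatching w.length (fun k l => (k, l) ∈ fcfsMatching R w) a b := fun a b =>
    Iff.of_eq (congrFun₂ ((isFCFSMatching_fcfsMatching R _).unique (hM.reflect hperf hu)) a b)
  refine ⟨(isPerfect_iff R _).2 fun a c ha => ?_, fun a b => ?_⟩
  · simpa only [hmatch] using hu.exists_reflectMatching hM hperf ha
  · simp [hmatch, reflectMatching]

/-- Time reversal of perfect blocks: if `w` is a perfect block, then the
reversal of its exchange transformation is also a perfect block, and its FCFS directed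
matching consists exactly of the original matched pairs with positions exchanged and
order reversed: `(k,l)` is a matched pair of `w` iff `(n−1−l, n−1−k)` is a matched pair
of the reversed exchanged word (`n` = length of `w`). -/
theorem stmt11 {C S : Type*} [Fintype C] [Fintype S] [Nonempty C] [Nonempty S]
    [Inhabited C]
    (R : C → S → Prop) [∀ c s, Decidable (R c s)]
    (w : List (C ⊕ S)) (hw : IsPerfect R w) :
    IsPerfect R (exchange R w).reverse ∧
    ∀ a b : ℕ, ((a, b) ∈ fcfsMatching R (exchange R w).reverse ↔
      ∃ p ∈ fcfsMatching R w,
        a = w.length - 1 - p.2 ∧ b = w.length - 1 - p.1) :=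
  stmt11_general R w hw
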